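/- arXiv:1003.3641 — 2 statements merged into one kernel-verified Lean document; each statement's English description precedes it below -/
import Mathlib

section
/- Let ε'(t) = ∂ε^j − k_j^{-1}(t^j − t)(t^j − 2t^{j-1} + t) ∂²ε^j on (t^{j-1}, t^j], with ∂²ε^j = (∂ε^j − ∂ε^{j-1})/k_j, values in a normed space. Then ∫_{t^{j-1}}^{t^j} ‖ε'(t)‖ dt ≤ (4k_j/3) ‖∂ε^j‖ + (2k_j/3) ‖∂ε^{j-1}‖. -/
/-!
Since `(t^j - t)(t^j - 2t^{j-1} + t) = k_j² - (t - t^{j-1})²`, with `θ t = ((t - t^{j-1}) / k_j)²`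
we get `ε'(t) = θ t • ∂ε^j + (1 - θ t) • ∂ε^{j-1}`, a convex combination on `[t^{j-1}, t^j]`.
The triangle inequality and `∫ θ = k_j / 3` then give the bound
`(k_j/3) ‖∂ε^j‖ + (2k_j/3) ‖∂ε^{j-1}‖`.
-/

open intervalIntegral Set

theorem norm_smul_add_one_sub_smul_le {E : Type*} [SeminormedAddCommGroup E] [NormedSpace ℝ E]
    {θ : ℝ} (h₀ : 0 ≤ θ) (h₁ : θ ≤ 1) (x y : E) :
    ‖θ • x + (1 - θ) • y‖ ≤ θ * ‖x‖ + (1 - θ) * ‖y‖ := by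
  calc ‖θ • x + (1 - θ) • y‖ ≤ ‖θ • x‖ + ‖(1 - θ) • y‖ := norm_add_le _ _
    _ = θ * ‖x‖ + (1 - θ) * ‖y‖ := by
      rw [norm_smul_of_nonneg h₀, norm_smul_of_nonneg (sub_nonneg.mpr h₁)]

theorem integral_norm_smul_add_one_sub_smul_le {E : Type*} [NormedAddCommGroup E]
    [NormedSpace ℝ E] {a b : ℝ} (hab : a ≤ b) {θ : ℝ → ℝ} (hθ : Continuous θ)
    (hθ_mem : ∀ t ∈ Icc a b, θ t ∈ Icc (0 : ℝ) 1) (x y : E) :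
    ∫ t in a..b, ‖θ t • x + (1 - θ t) • y‖
      ≤ (∫ t in a..b, θ t) * ‖x‖ + (b - a - ∫ t in a..b, θ t) * ‖y‖ := by
  have hθx : IntervalIntegrable (fun t ↦ θ t * ‖x‖) MeasureTheory.volume a b :=
    (hθ.mul continuous_const).intervalIntegrable a b
  have hθy : IntervalIntegrable (fun t ↦ (1 - θ t) * ‖y‖) MeasureTheory.volume a b :=
    ((continuous_const.sub hθ).mul continuous_const).intervalIntegrable a b
  calc ∫ t in a..b, ‖θ t • x + (1 - θ t) • y‖
      ≤ ∫ t in a..b, (θ t * ‖x‖ + (1 - θ t) * ‖y‖) := by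
        refine integral_mono_on hab ?_ (hθx.add hθy) fun t ht ↦ ?_
        · exact (((hθ.smul continuous_const).add
            ((continuous_const.sub hθ).smul continuous_const)).norm).intervalIntegrable a b
        · exact norm_smul_add_one_sub_smul_le (hθ_mem t ht).1 (hθ_mem t ht).2 x y
    _ = (∫ t in a..b, θ t) * ‖x‖ + (b - a - ∫ t in a..b, θ t) * ‖y‖ := by
        rw [integral_add hθx hθy, integral_mul_const, integral_mul_const,
          integral_sub intervalIntegrable_const (hθ.intervalIntegrable a b), integral_const,
          smul_eq_mul, mul_one]

theorem integral_div_sub_sq (a b : ℝ) : ∫ t in a..b, ((t - a) / (b - a)) ^ 2 = (b - a) / 3 := by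
  simp only [div_pow, intervalIntegral.integral_div, integral_comp_sub_right fun t ↦ t ^ 2,
    sub_self, integral_pow]
  rcases eq_or_ne (b - a) 0 with hba | hba
  · simp [hba]
  · field_simp
    ring

theorem div_sub_sq_mem_Icc {a b t : ℝ} (ht : t ∈ Icc a b) :
    ((t - a) / (b - a)) ^ 2 ∈ Icc (0 : ℝ) 1 := by
  refine ⟨sq_nonneg _, pow_le_one₀ (div_nonneg (sub_nonneg.mpr ht.1) (by linarith [ht.1, ht.2]))
    (div_le_one_of_le₀ (by linarith [ht.2]) (by linarith [ht.1, ht.2]))⟩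

/-- L¹-in-time bound for the derivative of the quadratic time reconstruction. -/
theorem elliptic_error_derivative_bound
    {H : Type*} [NormedAddCommGroup H] [NormedSpace ℝ H]
    (tjm1 tj : ℝ) (h : tjm1 < tj) (kj : ℝ) (hk : kj = tj - tjm1)
    (dejm1 dej d2ej : H)
    (hd2e : d2ej = (kj)⁻¹ • (dej - dejm1))
    (ε' : ℝ → H)
    (hε' : ∀ t, ε' t = dej - (kj⁻¹ * (tj - t) * (tj - 2 * tjm1 + t)) • d2ej) :
    (∫ t in tjm1..tj, ‖ε' t‖) ≤ (4 * kj / 3) * ‖dej‖ + (2 * kj / 3) * ‖dejm1‖ := by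
  subst hk hd2e
  set θ : ℝ → ℝ := fun t ↦ ((t - tjm1) / (tj - tjm1)) ^ 2
  have hkj : tj - tjm1 ≠ 0 := sub_ne_zero.mpr h.ne'
  have hε'_convex : ∀ t, ε' t = θ t • dej + (1 - θ t) • dejm1 := fun t ↦ by
    have hweight : (tj - tjm1)⁻¹ * (tj - t) * (tj - 2 * tjm1 + t) * (tj - tjm1)⁻¹ = 1 - θ t := by
      simp only [θ]
      field_simp
      ring
    rw [hε' t, smul_smul, hweight, smul_sub, sub_smul, one_smul]
    abel
  simp_rw [hε'_convex]
  refine (integral_norm_smul_add_one_sub_smul_le h.le (by fun_prop)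
    (fun t ht ↦ div_sub_sq_mem_Icc ht) dej dejm1).trans ?_
  rw [integral_div_sub_sq]
  nlinarith [norm_nonneg dej]
end

section
/- Let H be a Hilbert space with inner product ⟨·,·⟩, a a continuous symmetric positive semidefinite bilinear form on a subspace V ⊆ H, and let ρ : [0,τ] → V, e : [0,τ] → H be C¹ functions (with e'' existing weakly) satisfying ⟨e''(t), v⟩ + a(ρ(t), v) = 0 for all v ∈ V and a.e. t. Set ṽ(t) = ∫_t^τ ρ(s) ds and ε = ρ − e. Then (1/2)‖ρ(τ)‖² − (1/2)‖ρ(0)‖² + (1/2) a(ṽ(0), ṽ(0)) = ∫_0^τ ⟨ε'(t), ρ(t)⟩ dt + ⟨e'(0), ṽ(0)⟩. -/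
open MeasureTheory intervalIntegral Set

/-!
The energy `½‖ρ‖² - ½ a(ṽ, ṽ) + ⟨e', ṽ⟩` has derivative `⟨ρ' - e', ρ⟩`. Indeed `ṽ' = -ρ`, so
differentiating `a(ṽ, ṽ)` produces `-2 a(ρ, ṽ)`, while the functional `⟨e''(t), ·⟩ + a(ρ(t), ·)`
vanishes on `V`, hence on `ṽ(t) = ∫_t^τ ρ` (it commutes with the integral), which turns the term
`⟨e'', ṽ⟩` into `-a(ρ, ṽ)`. Integrating over `[0, τ]` and using `ṽ(τ) = 0` gives the identity.
-/

section Calculus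

variable {E : Type*} [NormedAddCommGroup E] [NormedSpace ℝ E] [CompleteSpace E]

theorem hasDerivWithinAt_integral_Icc_left {f : ℝ → E} {a b t : ℝ}
    (hf : ContinuousOn f (Icc a b)) (ht : t ∈ Icc a b) :
    HasDerivWithinAt (fun u => ∫ s in u..b, f s) (-f t) (Icc a b) t := by
  have : Fact (t ∈ Icc a b) := ⟨ht⟩
  have hint : IntervalIntegrable f volume t b :=
    (hf.mono (uIcc_subset_Icc ht (right_mem_Icc.2 (ht.1.trans ht.2)))).intervalIntegrable
  exact integral_hasDerivWithinAt_left hint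
    (hf.stronglyMeasurableAtFilter_nhdsWithin measurableSet_Icc t) (hf t ht)

theorem integral_eq_sub_of_hasDerivWithinAt_Icc {f f' : ℝ → E} {a b : ℝ} (hab : a ≤ b)
    (hderiv : ∀ t ∈ Icc a b, HasDerivWithinAt f (f' t) (Icc a b) t)
    (hint : IntervalIntegrable f' volume a b) :
    ∫ t in a..b, f' t = f b - f a :=
  integral_eq_sub_of_hasDerivAt_of_le hab (fun t ht => (hderiv t ht).continuousWithinAt)
    (fun t ht => (hderiv t (Ioo_subset_Icc_self ht)).hasDerivAt (Icc_mem_nhds ht.1 ht.2)) hint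

theorem ContinuousLinearMap.map_intervalIntegral_eq_zero {F : Type*} [NormedAddCommGroup F]
    [NormedSpace ℝ F] [CompleteSpace F] (L : E →L[ℝ] F) {f : ℝ → E} {a b : ℝ}
    (hf : IntervalIntegrable f volume a b) (h : ∀ s ∈ uIcc a b, L (f s) = 0) :
    L (∫ s in a..b, f s) = 0 := by
  rw [← L.intervalIntegral_comp_comm hf, integral_congr h, intervalIntegral.integral_zero]

end Calculus

section Energy

variable {H : Type*} [NormedAddCommGroup H] [InnerProductSpace ℝ H]

noncomputable def bakerEnergy (A : H →L[ℝ] H →L[ℝ] ℝ) (ρ e' v : ℝ → H) (t : ℝ) : ℝ :=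
  (1 / 2) * ‖ρ t‖ ^ 2 - (1 / 2) * A (v t) (v t) + inner ℝ (e' t) (v t)

theorem hasDerivWithinAt_bakerEnergy {A : H →L[ℝ] H →L[ℝ] ℝ} (hA : ∀ x y, A x y = A y x)
    {ρ e' v : ℝ → H} {r f : H} {s : Set ℝ} {t : ℝ}
    (hρ : HasDerivWithinAt ρ r s t) (he' : HasDerivWithinAt e' f s t)
    (hv : HasDerivWithinAt v (-ρ t) s t) (htest : inner ℝ f (v t) + A (ρ t) (v t) = 0) :
    HasDerivWithinAt (bakerEnergy A ρ e' v) (inner ℝ (r - e' t) (ρ t)) s t := by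
  have hderiv := ((hρ.norm_sq.const_mul (1 / 2)).sub
    ((A.hasDerivWithinAt_of_bilinear hv hv).const_mul (1 / 2))).add (he'.inner ℝ hv)
  refine hderiv.congr_deriv ?_
  simp only [map_neg, neg_apply, inner_neg_right, inner_sub_left,
    real_inner_comm (ρ t) r, hA (v t) (ρ t)]
  linarith

end Energy

theorem baker_testing_identity_general
    {H : Type*} [NormedAddCommGroup H] [InnerProductSpace ℝ H] [CompleteSpace H]
    (a : H →ₗ[ℝ] H →ₗ[ℝ] ℝ)
    (hcont : ∃ C : ℝ, ∀ x y : H, |a x y| ≤ C * ‖x‖ * ‖y‖)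
    (hsym : ∀ x y : H, a x y = a y x)
    (V : Submodule ℝ H)
    (τ : ℝ) (hτ : 0 ≤ τ)
    (ρ ρ' e' e'' : ℝ → H)
    (hρV : ∀ t ∈ Set.Icc 0 τ, ρ t ∈ V)
    (hρ : ∀ t ∈ Set.Icc 0 τ, HasDerivWithinAt ρ (ρ' t) (Set.Icc 0 τ) t)
    (hρ' : ContinuousOn ρ' (Set.Icc 0 τ))
    (he' : ∀ t ∈ Set.Icc 0 τ, HasDerivWithinAt e' (e'' t) (Set.Icc 0 τ) t)
    (heq : ∀ t ∈ Set.Icc 0 τ, ∀ v ∈ V, inner ℝ (e'' t) v + a (ρ t) v = 0)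
    (tv : ℝ → H) (htv : ∀ t, tv t = ∫ s in t..τ, ρ s)
    (ε' : ℝ → H) (hε' : ∀ t, ε' t = ρ' t - e' t) :
    (1 / 2) * ‖ρ τ‖ ^ 2 - (1 / 2) * ‖ρ 0‖ ^ 2 + (1 / 2) * a (tv 0) (tv 0)
      = (∫ t in (0:ℝ)..τ, (inner ℝ (ε' t) (ρ t) : ℝ)) + inner ℝ (e' 0) (tv 0) := by
  obtain ⟨C, hC⟩ := hcont
  let A : H →L[ℝ] H →L[ℝ] ℝ := a.mkContinuous₂ C fun x y => by simpa using hC x y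
  have hρc : ContinuousOn ρ (Icc 0 τ) := fun t ht => (hρ t ht).continuousWithinAt
  have htv' : ∀ t ∈ Icc 0 τ, HasDerivWithinAt tv (-ρ t) (Icc 0 τ) t := fun t ht =>
    funext htv ▸ hasDerivWithinAt_integral_Icc_left hρc ht
  have htest : ∀ t ∈ Icc 0 τ, inner ℝ (e'' t) (tv t) + A (ρ t) (tv t) = 0 := fun t ht => by
    rw [htv]
    refine (innerSL ℝ (e'' t) + A (ρ t)).map_intervalIntegral_eq_zero
      ((hρc.mono (uIcc_subset_Icc ht (right_mem_Icc.2 hτ))).intervalIntegrable) fun s hs => ?_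
    rw [uIcc_of_le ht.2] at hs
    exact heq t ht (ρ s) (hρV s ⟨ht.1.trans hs.1, hs.2⟩)
  have hε'c : ContinuousOn ε' (Icc 0 τ) :=
    (hρ'.sub fun t ht => (he' t ht).continuousWithinAt).congr fun t _ => hε' t
  have hftc := integral_eq_sub_of_hasDerivWithinAt_Icc hτ
    (fun t ht => hε' t ▸ hasDerivWithinAt_bakerEnergy (A := A) hsym (hρ t ht) (he' t ht)
      (htv' t ht) (htest t ht))
    ((hε'c.inner hρc).intervalIntegrable_of_Icc hτ)
  rw [hftc]
  simp only [bakerEnergy, htv τ, integral_same, map_zero, inner_zero_right, A,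
    LinearMap.mkContinuous₂_apply]
  ring

/-- Abstract Baker testing identity: testing the error equation with ṽ(t) = ∫_t^τ ρ
    and integrating in time yields
    (1/2)‖ρ(τ)‖² - (1/2)‖ρ(0)‖² + (1/2)a(ṽ(0),ṽ(0))
      = ∫_0^τ ⟨ε'(t), ρ(t)⟩ dt + ⟨e'(0), ṽ(0)⟩. -/
theorem baker_testing_identity
    {H : Type*} [NormedAddCommGroup H] [InnerProductSpace ℝ H] [CompleteSpace H]
    (a : H →ₗ[ℝ] H →ₗ[ℝ] ℝ)
    (hcont : ∃ C : ℝ, ∀ x y : H, |a x y| ≤ C * ‖x‖ * ‖y‖)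
    (hsym : ∀ x y : H, a x y = a y x)
    (V : Submodule ℝ H)
    (hpsd : ∀ v ∈ V, 0 ≤ a v v)
    (τ : ℝ) (hτ : 0 ≤ τ)
    (ρ ρ' e e' e'' : ℝ → H)
    (hρV : ∀ t ∈ Set.Icc 0 τ, ρ t ∈ V)
    (hρ : ∀ t ∈ Set.Icc 0 τ, HasDerivWithinAt ρ (ρ' t) (Set.Icc 0 τ) t)
    (hρ' : ContinuousOn ρ' (Set.Icc 0 τ))
    (he : ∀ t ∈ Set.Icc 0 τ, HasDerivWithinAt e (e' t) (Set.Icc 0 τ) t)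
    (he' : ∀ t ∈ Set.Icc 0 τ, HasDerivWithinAt e' (e'' t) (Set.Icc 0 τ) t)
    (he'' : ContinuousOn e'' (Set.Icc 0 τ))
    (heq : ∀ t ∈ Set.Icc 0 τ, ∀ v ∈ V, inner ℝ (e'' t) v + a (ρ t) v = 0)
    (tv : ℝ → H) (htv : ∀ t, tv t = ∫ s in t..τ, ρ s)
    (ε' : ℝ → H) (hε' : ∀ t, ε' t = ρ' t - e' t) :
    (1 / 2) * ‖ρ τ‖ ^ 2 - (1 / 2) * ‖ρ 0‖ ^ 2 + (1 / 2) * a (tv 0) (tv 0)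
      = (∫ t in (0:ℝ)..τ, (inner ℝ (ε' t) (ρ t) : ℝ)) + inner ℝ (e' 0) (tv 0) :=
  baker_testing_identity_general a hcont hsym V τ hτ ρ ρ' e' e'' hρV hρ hρ' he' heq tv htv ε' hε'
end
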